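/- arXiv:2401.02203 — 2 statements merged into one kernel-verified Lean document; each statement's English description precedes it below -/
import Mathlib

section
/- If x ~ t_d(μ, Σ, ν), ε = x − μ and δ = ε'Σ^{-1}ε, then E[(ν+δ)^{-1} ε ε'] = Σ/(ν+d). -/
open MeasureTheory Matrix Set
open scoped Kronecker

noncomputable section

instance matrixMeasureSpace {m n : ℕ} : MeasureSpace (Matrix (Fin m) (Fin n) ℝ) :=
  inferInstanceAs (MeasureSpace ((Fin m) → (Fin n) → ℝ))

/-- Column-stacking vectorization of a matrix (indexed by (column, row)). -/
def vecM {dc dr : ℕ} (A : Matrix (Fin dc) (Fin dr) ℝ) : (Fin dr × Fin dc) → ℝ :=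
  fun p => A p.2 p.1

/-- Density of the multivariate t distribution `t_d(μ, S, ν)`. -/
def mvtPdf {n : Type*} [Fintype n] [DecidableEq n] (ν : ℝ) (μ : n → ℝ)
    (S : Matrix n n ℝ) (x : n → ℝ) : ℝ :=
  S.det ^ (-(1:ℝ)/2) * Real.Gamma ((ν + Fintype.card n) / 2) /
    ((Real.pi * ν) ^ ((Fintype.card n : ℝ) / 2) * Real.Gamma (ν / 2)) *
    (1 + (x - μ) ⬝ᵥ (S⁻¹ *ᵥ (x - μ)) / ν) ^ (-(ν + Fintype.card n) / 2)

/-- Density of the multivariate normal distribution `N(μ, S)`. -/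
def mvnPdf {n : Type*} [Fintype n] [DecidableEq n] (μ : n → ℝ)
    (S : Matrix n n ℝ) (x : n → ℝ) : ℝ :=
  (2 * Real.pi) ^ (-(Fintype.card n : ℝ) / 2) * S.det ^ (-(1:ℝ)/2) *
    Real.exp (-((x - μ) ⬝ᵥ (S⁻¹ *ᵥ (x - μ))) / 2)

/-- Density of the matrix-variate t distribution `Mt_{dc,dr}(W, Sc, Sr, ν)`. -/
def matTPdf {dc dr : ℕ} (ν : ℝ) (W : Matrix (Fin dc) (Fin dr) ℝ)
    (Sc : Matrix (Fin dc) (Fin dc) ℝ) (Sr : Matrix (Fin dr) (Fin dr) ℝ)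
    (X : Matrix (Fin dc) (Fin dr) ℝ) : ℝ :=
  Sc.det ^ (-(dr : ℝ) / 2) * Sr.det ^ (-(dc : ℝ) / 2) *
    Real.Gamma ((ν + dc * dr) / 2) /
    ((Real.pi * ν) ^ ((dc * dr : ℕ) / (2:ℝ)) * Real.Gamma (ν / 2)) *
    (1 + (Sc⁻¹ * (X - W) * Sr⁻¹ * (X - W)ᵀ).trace / ν) ^ (-(ν + dc * dr) / 2)

/-- Density of the matrix-normal distribution `N_{p,q}(M, U, V)`. -/
def matNormPdf {p q : ℕ} (M : Matrix (Fin p) (Fin q) ℝ) (U : Matrix (Fin p) (Fin p) ℝ)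
    (V : Matrix (Fin q) (Fin q) ℝ) (X : Matrix (Fin p) (Fin q) ℝ) : ℝ :=
  mvnPdf (vecM M) (V ⊗ₖ U) (vecM X)

/-- Density of the Gamma(shape a, rate b) distribution (on `(0,∞)`). -/
def gammaPdf (a b x : ℝ) : ℝ :=
  if 0 < x then b ^ a / Real.Gamma a * x ^ (a - 1) * Real.exp (-(b * x)) else 0

/-- Density of the Beta(a, b) distribution. -/
def betaPdf (a b x : ℝ) : ℝ :=
  if 0 < x ∧ x < 1 then
    Real.Gamma (a + b) / (Real.Gamma a * Real.Gamma b) * x ^ (a - 1) * (1 - x) ^ (b - 1)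
  else 0

/-- Density of the F distribution with `d` and `ν` degrees of freedom. -/
def fPdf (d ν x : ℝ) : ℝ :=
  if 0 < x then
    Real.Gamma ((d + ν) / 2) / (Real.Gamma (d / 2) * Real.Gamma (ν / 2)) *
      (d / ν) ^ (d / 2) * x ^ (d / 2 - 1) * (1 + d * x / ν) ^ (-(d + ν) / 2)
  else 0

/-!
Write `Σ = A Aᵀ` and `w(t) = tWeight d ν t = (ν + t)⁻¹ (1 + t/ν)^(-(ν+d)/2)`, so that the
integrand is the normalizing constant of the density times `εᵢ εⱼ w(δ)`. Translating by `μ` and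
substituting `ε = A z` turns `δ` into `|z|²` and the integral into
`|det A| ∑ₖₗ Aᵢₖ Aⱼₗ ∫ zₖ zₗ w(|z|²) dz`. Reflecting one coordinate kills the terms with `k ≠ l`,
and swapping coordinates shows that the diagonal terms are all `(1/d) ∫ |z|² w(|z|²) dz`, so the
integral is `|det A| Σᵢⱼ / d · ∫ |z|² w(|z|²) dz`. In polar coordinates, the substitution
`x = r²/(ν + r²)` reduces the last integral to the Beta integral `B(d/2 + 1, ν/2)`, and
`Γ((ν+d)/2 + 1) = (ν+d)/2 · Γ((ν+d)/2)` leaves exactly the factor `1/(ν + d)`.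
-/

lemma ofReal_rpow_mul_one_sub_rpow {a b x : ℝ} (hx : x ∈ Icc (0 : ℝ) 1) :
    ((x ^ (a - 1) * (1 - x) ^ (b - 1) : ℝ) : ℂ)
      = (x : ℂ) ^ ((a : ℂ) - 1) * (1 - (x : ℂ)) ^ ((b : ℂ) - 1) := by
  push_cast
  rw [Complex.ofReal_cpow hx.1, Complex.ofReal_cpow (sub_nonneg.2 hx.2)]
  push_cast
  ring

lemma integrableOn_Ioo_rpow_mul_one_sub_rpow {a b : ℝ} (ha : 0 < a) (hb : 0 < b) :
    IntegrableOn (fun x : ℝ => x ^ (a - 1) * (1 - x) ^ (b - 1)) (Ioo 0 1) := by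
  have hc := Complex.betaIntegral_convergent (u := a) (v := b) (by simpa) (by simpa)
  rw [intervalIntegrable_iff_integrableOn_Ioc_of_le zero_le_one] at hc
  refine (integrableOn_congr_fun (fun x hx => ?_) measurableSet_Ioo).mp
    (hc.mono_set Ioo_subset_Ioc_self).re
  simp [← ofReal_rpow_mul_one_sub_rpow (Ioo_subset_Icc_self hx)]

lemma integral_Ioo_rpow_mul_one_sub_rpow {a b : ℝ} (ha : 0 < a) (hb : 0 < b) :
    ∫ x in Ioo 0 1, x ^ (a - 1) * (1 - x) ^ (b - 1)
      = Real.Gamma a * Real.Gamma b / Real.Gamma (a + b) := by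
  have h := Complex.Gamma_mul_Gamma_eq_betaIntegral (s := a) (t := b) (by simpa) (by simpa)
  rw [Complex.betaIntegral, intervalIntegral.integral_of_le zero_le_one,
    setIntegral_congr_fun measurableSet_Ioc (fun x hx =>
      (ofReal_rpow_mul_one_sub_rpow (a := a) (b := b) (Ioc_subset_Icc_self hx)).symm),
    integral_complex_ofReal, ← Complex.ofReal_add, Complex.Gamma_ofReal, Complex.Gamma_ofReal,
    Complex.Gamma_ofReal] at h
  have h' : Real.Gamma a * Real.Gamma b
      = Real.Gamma (a + b) * ∫ x in Ioc 0 1, x ^ (a - 1) * (1 - x) ^ (b - 1) := by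
    exact_mod_cast h
  rw [← integral_Ioc_eq_integral_Ioo, eq_div_iff (Real.Gamma_pos_of_pos (add_pos ha hb)).ne', h',
    mul_comm]

section SqDivAddSq

variable {ν : ℝ}

lemma hasDerivAt_sq_div_add_sq (hν : 0 < ν) (r : ℝ) :
    HasDerivAt (fun r : ℝ => r ^ 2 / (ν + r ^ 2)) (2 * ν * r / (ν + r ^ 2) ^ 2) r := by
  have hP : ν + r ^ 2 ≠ 0 := by positivity
  refine ((hasDerivAt_pow 2 r).div ((hasDerivAt_pow 2 r).const_add ν) hP).congr_deriv ?_
  field_simp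
  ring

lemma injOn_sq_div_add_sq (hν : 0 < ν) : InjOn (fun r : ℝ => r ^ 2 / (ν + r ^ 2)) (Ioi 0) := by
  intro r (hr : 0 < r) s (hs : 0 < s) h
  rw [div_eq_div_iff (by positivity) (by positivity)] at h
  have : (r - s) * (r + s) = 0 := by nlinarith
  rcases mul_eq_zero.1 this with h | h <;> linarith

lemma image_sq_div_add_sq (hν : 0 < ν) :
    (fun r : ℝ => r ^ 2 / (ν + r ^ 2)) '' Ioi 0 = Ioo 0 1 := by
  ext x
  constructor
  · rintro ⟨r, hr : 0 < r, rfl⟩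
    exact ⟨by positivity, (div_lt_one (by positivity)).2 (by linarith)⟩
  · rintro ⟨hx0, hx1⟩
    have hy : 0 < ν * x / (1 - x) := div_pos (by positivity) (by linarith)
    refine ⟨√(ν * x / (1 - x)), Real.sqrt_pos.2 hy, ?_⟩
    simp only [Real.sq_sqrt hy.le]
    field_simp
    ring

lemma abs_deriv_smul_beta_integrand_sq_div_add_sq (hν : 0 < ν) (a b : ℝ) {r : ℝ}
    (hr : 0 < r) :
    |2 * ν * r / (ν + r ^ 2) ^ 2| •
        ((r ^ 2 / (ν + r ^ 2)) ^ (a - 1) * (1 - r ^ 2 / (ν + r ^ 2)) ^ (b - 1))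
      = 2 * ν ^ b * (r ^ (2 * a - 1) * (ν + r ^ 2) ^ (-(a + b))) := by
  have hP : 0 < ν + r ^ 2 := by positivity
  have h1 : 1 - r ^ 2 / (ν + r ^ 2) = ν / (ν + r ^ 2) := by field_simp; ring
  have h2 : (r ^ 2) ^ a = r ^ (2 * a) := by rw [Real.rpow_mul hr.le, Real.rpow_two]
  rw [abs_of_pos (by positivity), smul_eq_mul, h1, Real.div_rpow (by positivity) hP.le,
    Real.div_rpow hν.le hP.le, Real.rpow_sub_one (by positivity), h2,
    Real.rpow_sub_one hν.ne', Real.rpow_sub_one hP.ne', Real.rpow_sub_one hP.ne',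
    Real.rpow_sub_one hr.ne', Real.rpow_neg hP.le, Real.rpow_add hP]
  field_simp

lemma integrableOn_Ioi_rpow_mul_add_sq_rpow (hν : 0 < ν) {a b : ℝ} (ha : 0 < a) (hb : 0 < b) :
    IntegrableOn (fun r : ℝ => r ^ (2 * a - 1) * (ν + r ^ 2) ^ (-(a + b))) (Ioi 0) := by
  have h := (integrableOn_image_iff_integrableOn_abs_deriv_smul measurableSet_Ioi
    (fun r _ => (hasDerivAt_sq_div_add_sq hν r).hasDerivWithinAt) (injOn_sq_div_add_sq hν)
    (fun x => x ^ (a - 1) * (1 - x) ^ (b - 1))).1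
  rw [image_sq_div_add_sq hν] at h
  refine (integrableOn_congr_fun (fun r hr => ?_) measurableSet_Ioi).1
    ((h (integrableOn_Ioo_rpow_mul_one_sub_rpow ha hb)).const_mul (2 * ν ^ b)⁻¹)
  rw [abs_deriv_smul_beta_integrand_sq_div_add_sq hν a b hr,
    inv_mul_cancel_left₀ (by positivity)]

lemma integral_Ioi_rpow_mul_add_sq_rpow (hν : 0 < ν) {a b : ℝ} (ha : 0 < a) (hb : 0 < b) :
    ∫ r in Ioi 0, r ^ (2 * a - 1) * (ν + r ^ 2) ^ (-(a + b))
      = Real.Gamma a * Real.Gamma b / Real.Gamma (a + b) / (2 * ν ^ b) := by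
  have h := integral_image_eq_integral_abs_deriv_smul measurableSet_Ioi
    (fun r _ => (hasDerivAt_sq_div_add_sq hν r).hasDerivWithinAt) (injOn_sq_div_add_sq hν)
    (fun x => x ^ (a - 1) * (1 - x) ^ (b - 1))
  rw [image_sq_div_add_sq hν, integral_Ioo_rpow_mul_one_sub_rpow ha hb,
    setIntegral_congr_fun measurableSet_Ioi
      (fun r hr => abs_deriv_smul_beta_integrand_sq_div_add_sq hν a b hr),
    integral_const_mul] at h
  rw [h, mul_div_cancel_left₀ _ (by positivity)]

end SqDivAddSq

section DotProductSelf

variable {ι : Type*} [Fintype ι]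

lemma dotProduct_self_nonneg (z : ι → ℝ) : 0 ≤ z ⬝ᵥ z :=
  Finset.sum_nonneg fun m _ => mul_self_nonneg (z m)

lemma mul_self_le_dotProduct_self (z : ι → ℝ) (k : ι) : z k * z k ≤ z ⬝ᵥ z :=
  Finset.single_le_sum (f := fun m => z m * z m) (fun m _ => mul_self_nonneg (z m))
    (Finset.mem_univ k)

lemma abs_mul_le_dotProduct_self (z : ι → ℝ) (k l : ι) : |z k * z l| ≤ z ⬝ᵥ z := by
  have hk := mul_self_le_dotProduct_self z k
  have hl := mul_self_le_dotProduct_self z l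
  rw [abs_le]
  constructor <;> nlinarith [sq_nonneg (z k + z l), sq_nonneg (z k - z l)]

lemma norm_toLp_sq (z : ι → ℝ) : ‖WithLp.toLp 2 z‖ ^ 2 = z ⬝ᵥ z := by
  rw [EuclideanSpace.norm_sq_eq]
  simp [dotProduct, sq]

/-- Polar coordinates; `√π ^ n / Γ(n/2 + 1)` is the volume of the unit ball of `ℝⁿ`. -/
lemma integral_comp_dotProduct_self [Nonempty ι] (f : ℝ → ℝ) :
    ∫ z : ι → ℝ, f (z ⬝ᵥ z)
      = Fintype.card ι * (√Real.pi ^ Fintype.card ι / Real.Gamma (Fintype.card ι / 2 + 1) *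
          ∫ r in Ioi 0, r ^ (Fintype.card ι - 1) * f (r ^ 2)) := by
  simp_rw [← norm_toLp_sq]
  rw [(PiLp.volume_preserving_toLp ι).integral_comp (MeasurableEquiv.toLp 2 _).measurableEmbedding
      (fun x => f (‖x‖ ^ 2)),
    integral_fun_norm_addHaar volume (fun r => f (r ^ 2)), finrank_euclideanSpace,
    measureReal_def, EuclideanSpace.volume_ball, ENNReal.toReal_mul, ENNReal.toReal_ofReal]
  · simp
  · positivity

lemma integrable_comp_dotProduct_self_iff [Nonempty ι] {f : ℝ → ℝ} :
    Integrable (fun z : ι → ℝ => f (z ⬝ᵥ z))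
      ↔ IntegrableOn (fun r => r ^ (Fintype.card ι - 1) * f (r ^ 2)) (Ioi 0) := by
  simp_rw [← norm_toLp_sq]
  rw [← Function.comp_def (fun x => f (‖x‖ ^ 2)),
    (PiLp.volume_preserving_toLp ι).integrable_comp_emb
      (MeasurableEquiv.toLp 2 _).measurableEmbedding,
    integrable_fun_norm_addHaar volume (f := fun r => f (r ^ 2)), finrank_euclideanSpace]
  rfl

variable [DecidableEq ι]

lemma integral_comp_mulVec {M : Matrix ι ι ℝ} (hM : M.det ≠ 0) (f : (ι → ℝ) → ℝ) :
    ∫ x, f (M *ᵥ x) = |M.det|⁻¹ * ∫ x, f x := by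
  let e : (ι → ℝ) ≃ᵐ (ι → ℝ) :=
    (M.toLinearEquiv' (M.invertibleOfIsUnitDet hM.isUnit)).toContinuousLinearEquiv
      |>.toHomeomorph.toMeasurableEquiv
  have he : Measure.map e volume = ENNReal.ofReal |M.det⁻¹| • volume :=
    Real.map_matrix_volume_pi_eq_smul_volume_pi hM
  have h := integral_map_equiv (μ := volume) e f
  rw [he, integral_smul_measure, ENNReal.toReal_ofReal (abs_nonneg _), abs_inv,
    smul_eq_mul] at h
  exact h.symm

lemma integral_comp_mulVec_of_abs_det_eq_one {M : Matrix ι ι ℝ} (hM : |M.det| = 1)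
    (f : (ι → ℝ) → ℝ) : ∫ x, f (M *ᵥ x) = ∫ x, f x := by
  rw [integral_comp_mulVec (abs_pos.1 (hM ▸ one_pos)), hM, inv_one, one_mul]

lemma integral_mul_mul_comp_dotProduct_self_of_ne {k l : ι} (hkl : k ≠ l) (h : ℝ → ℝ) :
    ∫ z : ι → ℝ, z k * z l * h (z ⬝ᵥ z) = 0 := by
  set M : Matrix ι ι ℝ := diagonal (Function.update 1 k (-1))
  have hdet : |M.det| = 1 := by simp [M, det_diagonal, Finset.prod_update_of_mem]
  have hM (z : ι → ℝ) : M *ᵥ z = Function.update z k (-z k) := by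
    ext m
    by_cases hm : m = k <;> simp [M, mulVec_diagonal, hm]
  have hdot (z : ι → ℝ) :
      Function.update z k (-z k) ⬝ᵥ Function.update z k (-z k) = z ⬝ᵥ z := by
    refine Finset.sum_congr rfl fun m _ => ?_
    by_cases hm : m = k <;> simp [hm]
  have h_neg := integral_comp_mulVec_of_abs_det_eq_one hdet fun z => z k * z l * h (z ⬝ᵥ z)
  simp only [hM, hdot, Function.update_self, Function.update_of_ne hkl.symm, neg_mul,
    integral_neg] at h_neg
  linarith

lemma integral_mul_self_comp_dotProduct_self_eq (k l : ι) (h : ℝ → ℝ) :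
    ∫ z : ι → ℝ, z k * z k * h (z ⬝ᵥ z) = ∫ z : ι → ℝ, z l * z l * h (z ⬝ᵥ z) := by
  set σ := Equiv.swap k l
  have hdet : |(σ.permMatrix ℝ).det| = 1 := by
    rcases eq_or_ne k l with rfl | hkl
    · simp [σ]
    · simp [det_permutation, σ, Equiv.Perm.sign_swap hkl]
  have hdot (z : ι → ℝ) : (z ∘ σ) ⬝ᵥ (z ∘ σ) = z ⬝ᵥ z := Equiv.sum_comp σ fun m => z m * z m
  have h_swap := integral_comp_mulVec_of_abs_det_eq_one hdet fun z => z k * z k * h (z ⬝ᵥ z)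
  simp only [permMatrix_mulVec, hdot, Function.comp_apply, σ, Equiv.swap_apply_left] at h_swap
  exact h_swap.symm

variable {h : ℝ → ℝ}

omit [DecidableEq ι] in
lemma integrable_mul_mul_comp_dotProduct_self (hh : Measurable h)
    (hint : Integrable fun z : ι → ℝ => (z ⬝ᵥ z) * h (z ⬝ᵥ z)) (k l : ι) :
    Integrable fun z : ι → ℝ => z k * z l * h (z ⬝ᵥ z) := by
  have hh' : Measurable fun z : ι → ℝ => h (z ⬝ᵥ z) :=
    hh.comp (continuous_id.dotProduct continuous_id).measurable
  refine hint.mono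
    (((measurable_pi_apply k).mul (measurable_pi_apply l)).mul hh').aestronglyMeasurable
    (.of_forall fun z => ?_)
  rw [norm_mul, norm_mul (z ⬝ᵥ z), Real.norm_of_nonneg (dotProduct_self_nonneg z)]
  exact mul_le_mul_of_nonneg_right (abs_mul_le_dotProduct_self z k l) (norm_nonneg _)

lemma integral_mul_mul_comp_dotProduct_self (hh : Measurable h)
    (hint : Integrable fun z : ι → ℝ => (z ⬝ᵥ z) * h (z ⬝ᵥ z)) (k l : ι) :
    ∫ z : ι → ℝ, z k * z l * h (z ⬝ᵥ z)
      = (1 : Matrix ι ι ℝ) k l * (∫ z : ι → ℝ, (z ⬝ᵥ z) * h (z ⬝ᵥ z)) / Fintype.card ι := by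
  have : Nonempty ι := ⟨k⟩
  rcases eq_or_ne k l with rfl | hkl
  · have htrace : ∫ z : ι → ℝ, (z ⬝ᵥ z) * h (z ⬝ᵥ z)
        = Fintype.card ι * ∫ z : ι → ℝ, z k * z k * h (z ⬝ᵥ z) := by
      have hsum : (fun z : ι → ℝ => (z ⬝ᵥ z) * h (z ⬝ᵥ z))
          = fun z => ∑ m, z m * z m * h (z ⬝ᵥ z) := funext fun z => Finset.sum_mul _ _ _
      rw [hsum, integral_finsetSum _ fun m _ => integrable_mul_mul_comp_dotProduct_self hh hint m m,
        Finset.sum_congr rfl fun m _ => integral_mul_self_comp_dotProduct_self_eq m k h,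
        Finset.sum_const, Finset.card_univ, nsmul_eq_mul]
    rw [htrace, one_apply_eq, one_mul, mul_div_cancel_left₀ _ (by simp)]
  · rw [integral_mul_mul_comp_dotProduct_self_of_ne hkl, one_apply_ne hkl, zero_mul, zero_div]

lemma dotProduct_mulVec_inv_mul_transpose_mulVec {A : Matrix ι ι ℝ} (hA : A.det ≠ 0)
    (z : ι → ℝ) : (A *ᵥ z) ⬝ᵥ ((A * Aᵀ)⁻¹ *ᵥ (A *ᵥ z)) = z ⬝ᵥ z := by
  have hz : A⁻¹ *ᵥ (A *ᵥ z) = z := by rw [mulVec_mulVec, nonsing_inv_mul A hA.isUnit, one_mulVec]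
  have hAT : IsUnit Aᵀ.det := by rw [det_transpose]; exact hA.isUnit
  rw [Matrix.mul_inv_rev, ← mulVec_mulVec, hz, dotProduct_comm, dotProduct_mulVec,
    ← mulVec_transpose, mulVec_mulVec, mul_nonsing_inv _ hAT, one_mulVec]

lemma integral_sub_mul_sub_mul_comp_quadForm (hh : Measurable h)
    (hint : Integrable fun z : ι → ℝ => (z ⬝ᵥ z) * h (z ⬝ᵥ z)) (μ : ι → ℝ)
    {A : Matrix ι ι ℝ} (hA : A.det ≠ 0) (i j : ι) :
    ∫ x : ι → ℝ, (x i - μ i) * (x j - μ j) * h ((x - μ) ⬝ᵥ ((A * Aᵀ)⁻¹ *ᵥ (x - μ)))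
      = |A.det| * (A * Aᵀ) i j * (∫ z : ι → ℝ, (z ⬝ᵥ z) * h (z ⬝ᵥ z)) / Fintype.card ι := by
  have hexpand (z : ι → ℝ) :
      (A *ᵥ z) i * (A *ᵥ z) j * h ((A *ᵥ z) ⬝ᵥ ((A * Aᵀ)⁻¹ *ᵥ (A *ᵥ z)))
        = ∑ k, ∑ l, A i k * A j l * (z k * z l * h (z ⬝ᵥ z)) := by
    rw [dotProduct_mulVec_inv_mul_transpose_mulVec hA, mulVec, mulVec, dotProduct, dotProduct,
      Finset.sum_mul_sum, Finset.sum_mul]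
    refine Finset.sum_congr rfl fun k _ => ?_
    rw [Finset.sum_mul]
    exact Finset.sum_congr rfl fun l _ => by ring
  have hterm (k l : ι) :=
    (integrable_mul_mul_comp_dotProduct_self hh hint k l).const_mul (A i k * A j l)
  calc ∫ x : ι → ℝ, (x i - μ i) * (x j - μ j) * h ((x - μ) ⬝ᵥ ((A * Aᵀ)⁻¹ *ᵥ (x - μ)))
      = ∫ y : ι → ℝ, y i * y j * h (y ⬝ᵥ ((A * Aᵀ)⁻¹ *ᵥ y)) :=
        integral_sub_right_eq_self (fun y => y i * y j * h (y ⬝ᵥ ((A * Aᵀ)⁻¹ *ᵥ y))) μ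
    _ = |A.det| * ∫ z : ι → ℝ,
          (A *ᵥ z) i * (A *ᵥ z) j * h ((A *ᵥ z) ⬝ᵥ ((A * Aᵀ)⁻¹ *ᵥ (A *ᵥ z))) := by
        rw [integral_comp_mulVec hA (fun y => y i * y j * h (y ⬝ᵥ ((A * Aᵀ)⁻¹ *ᵥ y))),
          mul_inv_cancel_left₀ (abs_ne_zero.2 hA)]
    _ = |A.det| * ∑ k, ∑ l, A i k * A j l *
          ((1 : Matrix ι ι ℝ) k l * (∫ z : ι → ℝ, (z ⬝ᵥ z) * h (z ⬝ᵥ z)) / Fintype.card ι) := by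
        simp_rw [hexpand]
        rw [integral_finsetSum _ fun k _ => integrable_finsetSum _ fun l _ => hterm k l]
        simp_rw [integral_finsetSum _ fun l _ => hterm _ l, integral_const_mul,
          integral_mul_mul_comp_dotProduct_self hh hint]
    _ = |A.det| * (A * Aᵀ) i j * (∫ z : ι → ℝ, (z ⬝ᵥ z) * h (z ⬝ᵥ z)) / Fintype.card ι := by
        rw [Finset.sum_congr rfl fun k _ => Fintype.sum_eq_single k fun l hl => by
          rw [one_apply_ne hl.symm, zero_mul, zero_div, mul_zero]]
        simp only [one_apply_eq, one_mul, mul_apply, transpose_apply, Finset.mul_sum,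
          Finset.sum_mul, Finset.sum_div]
        exact Finset.sum_congr rfl fun k _ => by ring

end DotProductSelf

section Factorization

variable {ι : Type*} [Fintype ι] [DecidableEq ι]

open scoped MatrixOrder in
lemma Matrix.PosDef.exists_eq_mul_transpose {S : Matrix ι ι ℝ} (hS : S.PosDef) :
    ∃ A : Matrix ι ι ℝ, A.det ≠ 0 ∧ S = A * Aᵀ := by
  refine ⟨CFC.sqrt S, fun h => hS.det_pos.ne' ?_, ?_⟩
  · rw [← CFC.sqrt_mul_sqrt_self S hS.posSemidef.nonneg, det_mul, h, zero_mul]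
  · have hT : (CFC.sqrt S)ᵀ = CFC.sqrt S := by
      simpa [conjTranspose_eq_transpose_of_trivial] using
        (CFC.sqrt_nonneg S).posSemidef.isHermitian.eq
    rw [hT, CFC.sqrt_mul_sqrt_self S hS.posSemidef.nonneg]

lemma abs_det_mul_det_mul_transpose_rpow {A : Matrix ι ι ℝ} (hA : A.det ≠ 0) :
    |A.det| * (A * Aᵀ).det ^ (-(1 : ℝ) / 2) = 1 := by
  rw [det_mul, det_transpose, ← abs_mul_abs_self, ← sq, ← Real.rpow_natCast,
    ← Real.rpow_mul (abs_nonneg _), Nat.cast_ofNat, show (2 : ℝ) * (-1 / 2) = -1 by norm_num,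
    Real.rpow_neg_one, mul_inv_cancel₀ (abs_ne_zero.2 hA)]

end Factorization

def tWeight (d : ℕ) (ν t : ℝ) : ℝ := (ν + t)⁻¹ * (1 + t / ν) ^ (-(ν + d) / 2)

lemma measurable_tWeight (d : ℕ) (ν : ℝ) : Measurable (tWeight d ν) := by
  unfold tWeight
  fun_prop

section TWeight

variable {ν : ℝ}

lemma inv_add_mul_mul_mvtPdf {ι : Type*} [Fintype ι] [DecidableEq ι] (μ : ι → ℝ)
    (S : Matrix ι ι ℝ) (c : ℝ) (x : ι → ℝ) :
    (ν + (x - μ) ⬝ᵥ (S⁻¹ *ᵥ (x - μ)))⁻¹ * c * mvtPdf ν μ S x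
      = S.det ^ (-(1 : ℝ) / 2) * Real.Gamma ((ν + Fintype.card ι) / 2) /
          ((Real.pi * ν) ^ ((Fintype.card ι : ℝ) / 2) * Real.Gamma (ν / 2)) *
        (c * tWeight (Fintype.card ι) ν ((x - μ) ⬝ᵥ (S⁻¹ *ᵥ (x - μ)))) := by
  rw [mvtPdf, tWeight]
  ring

lemma pow_mul_sq_mul_tWeight_sq (hν : 0 < ν) {d : ℕ} (hd : 1 ≤ d) {r : ℝ} (hr : 0 < r) :
    r ^ (d - 1) * (r ^ 2 * tWeight d ν (r ^ 2))
      = ν ^ ((ν + d) / 2) *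
          (r ^ (2 * ((d : ℝ) / 2 + 1) - 1) * (ν + r ^ 2) ^ (-((d : ℝ) / 2 + 1 + ν / 2))) := by
  have hP : 0 < ν + r ^ 2 := by positivity
  have hr_pow : r ^ (2 * ((d : ℝ) / 2 + 1) - 1) = r ^ (d - 1) * r ^ 2 := by
    rw [← pow_add, show d - 1 + 2 = d + 1 by omega, ← Real.rpow_natCast]
    push_cast
    ring_nf
  have h1 : 1 + r ^ 2 / ν = (ν + r ^ 2) / ν := by field_simp
  rw [tWeight, hr_pow, h1, neg_div, Real.rpow_neg (by positivity), Real.div_rpow hP.le hν.le,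
    show -((d : ℝ) / 2 + 1 + ν / 2) = -((ν + d) / 2 + 1) by ring, Real.rpow_neg hP.le,
    Real.rpow_add hP, Real.rpow_one]
  field_simp

variable {ι : Type*} [Fintype ι] [Nonempty ι]

lemma integrable_dotProduct_self_mul_tWeight (hν : 0 < ν) :
    Integrable fun z : ι → ℝ => (z ⬝ᵥ z) * tWeight (Fintype.card ι) ν (z ⬝ᵥ z) := by
  rw [integrable_comp_dotProduct_self_iff (f := fun t => t * tWeight _ ν t)]
  refine (integrableOn_congr_fun
    (fun r hr => (pow_mul_sq_mul_tWeight_sq hν Fintype.card_pos hr).symm) measurableSet_Ioi).1 ?_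
  exact (integrableOn_Ioi_rpow_mul_add_sq_rpow hν (by positivity) (by positivity)).const_mul _

lemma integral_dotProduct_self_mul_tWeight (hν : 0 < ν) :
    ∫ z : ι → ℝ, (z ⬝ᵥ z) * tWeight (Fintype.card ι) ν (z ⬝ᵥ z)
      = Fintype.card ι * (Real.pi * ν) ^ ((Fintype.card ι : ℝ) / 2) * Real.Gamma (ν / 2) /
          ((ν + Fintype.card ι) * Real.Gamma ((ν + Fintype.card ι) / 2)) := by
  have hd : 1 ≤ Fintype.card ι := Fintype.card_pos
  rw [integral_comp_dotProduct_self (fun t => t * tWeight _ ν t)]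
  generalize Fintype.card ι = d at hd ⊢
  rw [setIntegral_congr_fun measurableSet_Ioi (fun r hr => pow_mul_sq_mul_tWeight_sq hν hd hr),
    integral_const_mul, integral_Ioi_rpow_mul_add_sq_rpow hν (by positivity) (by positivity)]
  have hΓ : Real.Gamma ((d : ℝ) / 2 + 1 + ν / 2) = (ν + d) / 2 * Real.Gamma ((ν + d) / 2) := by
    rw [show (d : ℝ) / 2 + 1 + ν / 2 = (ν + d) / 2 + 1 by ring, Real.Gamma_add_one (by positivity)]
  have hπ : √Real.pi ^ d = Real.pi ^ ((d : ℝ) / 2) := by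
    rw [Real.sqrt_eq_rpow, ← Real.rpow_natCast, ← Real.rpow_mul Real.pi_pos.le]
    ring_nf
  have hν' : ν ^ ((ν + d) / 2) = ν ^ ((d : ℝ) / 2) * ν ^ (ν / 2) := by
    rw [← Real.rpow_add hν]
    ring_nf
  rw [hΓ, hπ, hν', Real.mul_rpow Real.pi_pos.le hν.le]
  have := Real.Gamma_pos_of_pos (show 0 < (d : ℝ) / 2 + 1 by positivity)
  have := Real.Gamma_pos_of_pos (show 0 < (ν + d) / 2 by positivity)
  field_simp

end TWeight

/-- if `x ~ t_d(μ, Σ, ν)`, `ε = x − μ`, `δ = ε'Σ⁻¹ε`, then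
`E[(ν+δ)⁻¹ ε ε'] = Σ/(ν+d)` (entrywise). -/
theorem expect_weighted_outer_first {d : ℕ} (ν : ℝ) (hν : 0 < ν)
    (μ : Fin d → ℝ) (S : Matrix (Fin d) (Fin d) ℝ) (hS : S.PosDef) :
    ∀ i j : Fin d,
      (∫ x : Fin d → ℝ,
          (ν + (x - μ) ⬝ᵥ (S⁻¹ *ᵥ (x - μ)))⁻¹ * ((x i - μ i) * (x j - μ j)) *
            mvtPdf ν μ S x) = S i j / (ν + d) := by
  intro i j
  have : Nonempty (Fin d) := ⟨i⟩
  obtain ⟨A, hA, rfl⟩ := hS.exists_eq_mul_transpose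
  simp_rw [inv_add_mul_mul_mvtPdf]
  rw [integral_const_mul, integral_sub_mul_sub_mul_comp_quadForm (measurable_tWeight _ ν)
      (integrable_dotProduct_self_mul_tWeight hν) μ hA i j,
    integral_dotProduct_self_mul_tWeight hν, Fintype.card_fin]
  have hdet := abs_det_mul_det_mul_transpose_rpow hA
  have : 0 < Real.Gamma (ν / 2) := Real.Gamma_pos_of_pos (by positivity)
  have : 0 < Real.Gamma ((ν + d) / 2) := Real.Gamma_pos_of_pos (by positivity)
  have : (0 : ℝ) < d := Nat.cast_pos.2 i.pos
  field_simp
  rw [neg_div] at hdet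
  linear_combination (A * Aᵀ) i j * hdet

end
end

section
/- Let S be a symmetric positive semidefinite d×d matrix with eigenvalues λ_1 ≥ λ_2 ≥ ... ≥ λ_d and corresponding orthonormal eigenvectors u_1, ..., u_d. Consider maximizing f(A) = −(ln|AA' + I| + tr((AA' + I)^{-1} S)) over A ∈ R^{d × q}. If λ_q ≥ 1, then a maximizer is given by A = U_q (Λ_q − I)^{1/2}, where U_q = (u_1,...,u_q) and Λ_q = diag(λ_1,...,λ_q); more generally the maximum is attained at A = U_{q'} (Λ_{q'} − I)^{1/2} V where q' is the largest index with λ_{q'} ≥ 1 (capped at q) and V is any q' × q matrix with VV' = I. -/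
open MeasureTheory Matrix Set
open scoped Kronecker

noncomputable section

/-!
Diagonalise `A Aᵀ = W diag(β) Wᵀ` with `β ≥ 0` having at most `q` nonzero entries, and put
`t i = (Wᵀ S W) i i = ∑ a, P a i * λ a`, where `P a i = ((Uᵀ W) a i)²` is doubly stochastic.
Then `-f(A) = ∑ i, (log (1 + β i) + t i / (1 + β i))`. Over `μ = 1 + β i ≥ 1` the term
`log μ + t / μ` is at least `t - ψ t`, where `ψ x = x - 1 - log x` for `x ≥ 1` and `0` otherwise,
and it equals `t` when `β i = 0`. Since `ψ` is convex and monotone, Jensen along the columns of `P`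
and a rearrangement along its rows bound `∑_{β i ≠ 0} ψ (t i)` by `∑_{a < q} ψ (λ a)`, while
`∑ t i = ∑ λ a`. The candidate `A₀` has `A₀ A₀ᵀ = U diag((λ a - 1) [a < q']) Uᵀ` and attains
this bound, because `ψ (λ a) = 0` for `q' ≤ a < q`.
-/

namespace TBFA

open Finset

/-- The `ψ` of the proof sketch: `x - truncLogGap x` is the minimum of `log μ + x / μ`
over `μ ≥ 1`. -/
def truncLogGap (x : ℝ) : ℝ := if 1 ≤ x then x - 1 - Real.log x else 0

def truncLogGapSlope (x : ℝ) : ℝ := if 1 ≤ x then 1 - x⁻¹ else 0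

lemma truncLogGap_nonneg (x : ℝ) : 0 ≤ truncLogGap x := by
  unfold truncLogGap
  split_ifs with h
  · linarith [Real.log_le_sub_one_of_pos (zero_lt_one.trans_le h)]
  · rfl

lemma truncLogGap_eq_zero_of_le_one {x : ℝ} (hx : x ≤ 1) : truncLogGap x = 0 := by
  unfold truncLogGap
  split_ifs with h
  · simp [le_antisymm hx h]
  · rfl

lemma truncLogGap_add_slope_mul_le (x y : ℝ) :
    truncLogGap x + truncLogGapSlope x * (y - x) ≤ truncLogGap y := by
  unfold truncLogGapSlope
  split_ifs with hx
  swap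
  · simpa [truncLogGap, hx] using truncLogGap_nonneg y
  have hx0 : 0 < x := zero_lt_one.trans_le hx
  have hslope : 0 ≤ 1 - x⁻¹ := sub_nonneg.mpr (inv_le_one_of_one_le₀ hx)
  unfold truncLogGap
  split_ifs with hy
  · -- log (y / x) ≤ y / x - 1
    have hy0 : 0 < y := zero_lt_one.trans_le hy
    have := Real.log_le_sub_one_of_pos (div_pos hy0 hx0)
    rw [Real.log_div hy0.ne' hx0.ne'] at this
    have e : (1 - x⁻¹) * (y - x) = y - x - (y / x - 1) := by field_simp
    rw [e]
    linarith
  · -- the left side is increasing in `y`, so it is enough to take `y = 1`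
    have h1 : (1 - x⁻¹) * (y - x) ≤ (1 - x⁻¹) * (1 - x) :=
      mul_le_mul_of_nonneg_left (by linarith) hslope
    have e : (1 - x⁻¹) * (1 - x) = 2 - x - x⁻¹ := by field_simp; ring
    linarith [Real.one_sub_inv_le_log_of_pos hx0]

lemma truncLogGap_monotone : Monotone truncLogGap := by
  intro x y hxy
  have hslope : 0 ≤ truncLogGapSlope x := by
    unfold truncLogGapSlope
    split_ifs with hx
    · exact sub_nonneg.mpr (inv_le_one_of_one_le₀ hx)
    · rfl
  nlinarith [truncLogGap_add_slope_mul_le x y]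

lemma truncLogGap_sum_le {ι : Type*} [Fintype ι] (w y : ι → ℝ) (hw0 : ∀ i, 0 ≤ w i)
    (hw1 : ∑ i, w i = 1) :
    truncLogGap (∑ i, w i * y i) ≤ ∑ i, w i * truncLogGap (y i) := by
  set x := ∑ i, w i * y i
  have key : ∀ i, w i * (truncLogGap x + truncLogGapSlope x * (y i - x)) ≤
      w i * truncLogGap (y i) := fun i =>
    mul_le_mul_of_nonneg_left (truncLogGap_add_slope_mul_le x (y i)) (hw0 i)
  have expand : ∑ i, w i * (truncLogGap x + truncLogGapSlope x * (y i - x)) =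
      truncLogGap x * ∑ i, w i + truncLogGapSlope x * (x - x * ∑ i, w i) := by
    simp only [mul_sum, ← sum_add_distrib, ← sum_sub_distrib, x]
    exact sum_congr rfl fun i _ => by ring
  calc truncLogGap x
      = ∑ i, w i * (truncLogGap x + truncLogGapSlope x * (y i - x)) := by
        rw [expand, hw1]; ring
    _ ≤ _ := sum_le_sum fun i _ => key i

lemma sub_truncLogGap_le_log_add_div (t : ℝ) {μ : ℝ} (hμ : 1 ≤ μ) :
    t - truncLogGap t ≤ Real.log μ + t / μ := by
  have hμ0 : 0 < μ := zero_lt_one.trans_le hμ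
  unfold truncLogGap
  split_ifs with ht
  · have ht0 : 0 < t := zero_lt_one.trans_le ht
    have := Real.log_le_sub_one_of_pos (div_pos ht0 hμ0)
    rw [Real.log_div ht0.ne' hμ0.ne'] at this
    linarith
  · have h : t * (1 - μ⁻¹) ≤ 1 - μ⁻¹ :=
      mul_le_of_le_one_left (sub_nonneg.mpr (inv_le_one_of_one_le₀ hμ)) (by linarith)
    have e : t / μ = t - t * (1 - μ⁻¹) := by field_simp; ring
    linarith [Real.one_sub_inv_le_log_of_pos hμ0]

lemma log_add_self_div_self_eq {x : ℝ} (hx : 1 ≤ x) :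
    Real.log x + x / x = x - truncLogGap x := by
  rw [div_self (zero_lt_one.trans_le hx).ne', truncLogGap, if_pos hx]
  ring

lemma sum_mul_le_sum_filter_lt {d q : ℕ} {f : Fin d → ℝ} (hf : Antitone f)
    (hf0 : ∀ a, 0 ≤ f a) {c : Fin d → ℝ} (hc0 : ∀ a, 0 ≤ c a) (hc1 : ∀ a, c a ≤ 1) (hcq : ∑ a, c a ≤ q) :
    ∑ a, c a * f a ≤ ∑ a : Fin d with a.val < q, f a := by
  -- compare every term with the threshold value `p = f q`
  set p : ℝ := if h : q < d then f ⟨q, h⟩ else 0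
  have hp_le : ∀ a : Fin d, a.val < q → p ≤ f a := by
    intro a ha
    by_cases hq : q < d
    · simpa only [p, dif_pos hq] using hf (Fin.le_def.mpr ha.le : a ≤ ⟨q, hq⟩)
    · simpa only [p, dif_neg hq] using hf0 a
  have hp_ge : ∀ a : Fin d, q ≤ a.val → f a ≤ p := by
    intro a ha
    have hq : q < d := ha.trans_lt a.isLt
    simpa only [p, dif_pos hq] using hf (Fin.le_def.mpr ha : (⟨q, hq⟩ : Fin d) ≤ a)
  have hterm : ∀ a, c a * f a ≤
      (if a.val < q then f a else 0) + p * (c a - if a.val < q then 1 else 0) := by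
    intro a
    by_cases ha : a.val < q
    · simp only [if_pos ha]
      nlinarith [hc1 a, hp_le a ha]
    · simp only [if_neg ha]
      nlinarith [hc0 a, hp_ge a (not_lt.mp ha)]
  have hp : p * (∑ a, c a - #{a : Fin d | a.val < q}) ≤ 0 := by
    rw [Fin.card_filter_val_lt]
    by_cases hq : q < d
    · simp only [p, dif_pos hq, min_eq_right hq.le]
      exact mul_nonpos_of_nonneg_of_nonpos (hf0 _) (by linarith)
    · simp [p, dif_neg hq]
  calc ∑ a, c a * f a
      ≤ ∑ a : Fin d,
          ((if a.val < q then f a else 0) + p * (c a - if a.val < q then 1 else 0)) :=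
        sum_le_sum fun a _ => hterm a
    _ = ∑ a : Fin d with a.val < q, f a + p * (∑ a, c a - #{a : Fin d | a.val < q}) := by
        rw [sum_add_distrib, ← mul_sum, sum_sub_distrib, ← sum_filter, sum_boole]
    _ ≤ ∑ a : Fin d with a.val < q, f a := by linarith

lemma sum_truncLogGap_le_of_mem_doublyStochastic {d q : ℕ} {P : Matrix (Fin d) (Fin d) ℝ}
    (hP : P ∈ doublyStochastic ℝ (Fin d)) {lam : Fin d → ℝ} (hlam : Antitone lam)
    {T : Finset (Fin d)} (hT : #T ≤ q) :
    ∑ i ∈ T, truncLogGap (∑ a, P a i * lam a) ≤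
      ∑ a : Fin d with a.val < q, truncLogGap (lam a) := by
  obtain ⟨hP0, hrow, hcol⟩ := mem_doublyStochastic_iff_sum.mp hP
  have hc1 : ∀ a, ∑ i ∈ T, P a i ≤ 1 := fun a =>
    (sum_le_sum_of_subset_of_nonneg (subset_univ T) fun i _ _ => hP0 a i).trans_eq (hrow a)
  have hcq : ∑ a, ∑ i ∈ T, P a i ≤ q := by
    refine sum_comm.trans_le ?_
    rw [sum_congr rfl fun i _ => hcol i, sum_const, nsmul_one]
    exact_mod_cast hT
  calc ∑ i ∈ T, truncLogGap (∑ a, P a i * lam a)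
      ≤ ∑ i ∈ T, ∑ a, P a i * truncLogGap (lam a) :=
        sum_le_sum fun i _ => truncLogGap_sum_le _ _ (fun a => hP0 a i) (hcol i)
    _ = ∑ a, (∑ i ∈ T, P a i) * truncLogGap (lam a) := by
        rw [sum_comm]; simp only [sum_mul]
    _ ≤ ∑ a : Fin d with a.val < q, truncLogGap (lam a) :=
        sum_mul_le_sum_filter_lt (truncLogGap_monotone.comp_antitone hlam)
          (fun a => truncLogGap_nonneg _) (fun a => sum_nonneg fun i _ => hP0 a i) hc1 hcq

lemma sum_sub_sum_truncLogGap_le {d q : ℕ} {P : Matrix (Fin d) (Fin d) ℝ}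
    (hP : P ∈ doublyStochastic ℝ (Fin d)) {lam : Fin d → ℝ} (hlam : Antitone lam)
    {β : Fin d → ℝ} (hβ0 : ∀ i, 0 ≤ β i) (hβq : #{i | β i ≠ 0} ≤ q) :
    ∑ a, lam a - ∑ a : Fin d with a.val < q, truncLogGap (lam a) ≤
      ∑ i, (Real.log (β i + 1) + (∑ a, P a i * lam a) / (β i + 1)) := by
  set t : Fin d → ℝ := fun i => ∑ a, P a i * lam a
  have hterm : ∀ i, t i - (if β i ≠ 0 then truncLogGap (t i) else 0) ≤
      Real.log (β i + 1) + t i / (β i + 1) := by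
    intro i
    by_cases hβi : β i = 0
    · simp [hβi]
    · simpa [hβi] using sub_truncLogGap_le_log_add_div (t i) (by linarith [hβ0 i])
  have htrace : ∑ i, t i = ∑ a, lam a := by
    rw [sum_comm]
    simp only [← sum_mul, (mem_doublyStochastic_iff_sum.mp hP).2.1, one_mul]
  calc ∑ a, lam a - ∑ a : Fin d with a.val < q, truncLogGap (lam a)
      ≤ ∑ i, t i - ∑ i with β i ≠ 0, truncLogGap (t i) := by
        rw [htrace]
        linarith [sum_truncLogGap_le_of_mem_doublyStochastic hP hlam hβq]
    _ = ∑ i, (t i - if β i ≠ 0 then truncLogGap (t i) else 0) := by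
        rw [sum_sub_distrib, sum_filter]
    _ ≤ _ := sum_le_sum fun i _ => hterm i

def loadingLoss {n : Type*} [Fintype n] [DecidableEq n] (S B : Matrix n n ℝ) : ℝ :=
  Real.log (B + 1).det + ((B + 1)⁻¹ * S).trace

section Orthogonal

variable {n : Type*} [Fintype n] [DecidableEq n] {W : Matrix n n ℝ}

lemma det_conj_transpose (hW : W * Wᵀ = 1) (X : Matrix n n ℝ) : (W * X * Wᵀ).det = X.det := by
  have h : W.det * W.det = 1 := by simpa using congr_arg det hW
  rw [det_mul, det_mul, det_transpose, mul_right_comm, h, one_mul]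

lemma inv_conj_diagonal (hW : W * Wᵀ = 1) {β : n → ℝ} (hβ : ∀ i, β i ≠ 0) :
    (W * diagonal β * Wᵀ)⁻¹ = W * diagonal β⁻¹ * Wᵀ := by
  refine inv_eq_right_inv ?_
  have hW' : Wᵀ * W = 1 := mul_eq_one_comm.mp hW
  calc W * diagonal β * Wᵀ * (W * diagonal β⁻¹ * Wᵀ)
      = W * (diagonal β * (Wᵀ * W) * diagonal β⁻¹) * Wᵀ := by
        simp only [Matrix.mul_assoc]
    _ = W * Wᵀ := by
        rw [hW', Matrix.mul_one, diagonal_mul_diagonal,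
          show (fun i => β i * β⁻¹ i) = fun _ => 1 from funext fun i => mul_inv_cancel₀ (hβ i),
          diagonal_one, Matrix.mul_one]
    _ = 1 := hW

lemma loadingLoss_conj_diagonal (S : Matrix n n ℝ) (hW : W * Wᵀ = 1) {β : n → ℝ}
    (hβ : ∀ i, β i + 1 ≠ 0) :
    loadingLoss S (W * diagonal β * Wᵀ) =
      ∑ i, (Real.log (β i + 1) + (Wᵀ * S * W) i i / (β i + 1)) := by
  have hadd : W * diagonal β * Wᵀ + 1 = W * Matrix.diagonal (β + 1) * Wᵀ := by
    have hdiag : Matrix.diagonal (β + 1) = diagonal β + 1 := by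
      rw [← diagonal_one, diagonal_add]; rfl
    rw [hdiag, Matrix.mul_add, Matrix.add_mul, Matrix.mul_one, hW]
  have htrace : (W * Matrix.diagonal (β + 1)⁻¹ * Wᵀ * S).trace =
      ∑ i, (Wᵀ * S * W) i i / (β i + 1) := by
    rw [Matrix.mul_assoc, Matrix.mul_assoc, trace_mul_comm, Matrix.mul_assoc]
    simp [trace, diagonal_mul, div_eq_inv_mul, Matrix.mul_assoc]
  rw [loadingLoss, hadd, det_conj_transpose hW, det_diagonal,
    inv_conj_diagonal hW (β := β + 1) hβ, htrace, Real.log_prod (f := β + 1) fun i _ => hβ i]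
  exact sum_add_distrib.symm

lemma transpose_mul_conj_diagonal_apply_self {U : Matrix n n ℝ} (lam : n → ℝ) (i : n) :
    (Wᵀ * (U * diagonal lam * Uᵀ) * W) i i = ∑ a, (Uᵀ * W) a i ^ 2 * lam a := by
  have h : Wᵀ * (U * diagonal lam * Uᵀ) * W = (Uᵀ * W)ᵀ * diagonal lam * (Uᵀ * W) := by
    simp only [transpose_mul, transpose_transpose, Matrix.mul_assoc]
  rw [h, mul_apply]
  simp only [mul_diagonal, transpose_apply]
  exact sum_congr rfl fun a _ => by ring

lemma of_sq_mem_doublyStochastic (hW : W * Wᵀ = 1) :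
    (Matrix.of fun a i => W a i ^ 2) ∈ doublyStochastic ℝ n := by
  have hW' : Wᵀ * W = 1 := mul_eq_one_comm.mp hW
  refine mem_doublyStochastic_iff_sum.mpr ⟨fun _ _ => sq_nonneg _, fun a => ?_, fun i => ?_⟩
  · simpa [mul_apply, sq] using congr_fun (congr_fun hW a) a
  · simpa [mul_apply, sq] using congr_fun (congr_fun hW' i) i

end Orthogonal

lemma le_loadingLoss {d q : ℕ} {U : Matrix (Fin d) (Fin d) ℝ} (hU : U * Uᵀ = 1)
    {lam : Fin d → ℝ} (hlam : Antitone lam) {B : Matrix (Fin d) (Fin d) ℝ} (hB : B.PosSemidef)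
    (hBq : B.rank ≤ q) :
    ∑ a, lam a - ∑ a : Fin d with a.val < q, truncLogGap (lam a) ≤
      loadingLoss (U * diagonal lam * Uᵀ) B := by
  set W : Matrix (Fin d) (Fin d) ℝ := (hB.1.eigenvectorUnitary : Matrix (Fin d) (Fin d) ℝ)
  set β := hB.1.eigenvalues
  have hW : W * Wᵀ = 1 := (mem_orthogonalGroup_iff (Fin d) ℝ).mp hB.1.eigenvectorUnitary.2
  have hspec : B = W * diagonal β * Wᵀ := by
    simpa [W, β, star_eq_conjTranspose] using hB.1.spectral_theorem
  have hβq : #{i | β i ≠ 0} ≤ q := by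
    rw [← Fintype.card_subtype, ← hB.1.rank_eq_card_non_zero_eigs]
    exact hBq
  have hG : (Uᵀ * W) * (Uᵀ * W)ᵀ = 1 := by
    rw [transpose_mul, transpose_transpose, Matrix.mul_assoc, ← Matrix.mul_assoc W, hW,
      Matrix.one_mul, mul_eq_one_comm.mp hU]
  rw [hspec, loadingLoss_conj_diagonal _ hW fun i => by linarith [hB.eigenvalues_nonneg i]]
  simp only [transpose_mul_conj_diagonal_apply_self]
  exact sum_sub_sum_truncLogGap_le (of_sq_mem_doublyStochastic hG) hlam
    hB.eigenvalues_nonneg hβq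

lemma submatrix_castLE_mul_diagonal_mul_transpose {d q' : ℕ} (h : q' ≤ d)
    (U : Matrix (Fin d) (Fin d) ℝ) (μ : Fin d → ℝ) :
    U.submatrix id (Fin.castLE h) * diagonal (μ ∘ Fin.castLE h) *
        (U.submatrix id (Fin.castLE h))ᵀ =
      U * diagonal (fun a => if a.val < q' then μ a else 0) * Uᵀ := by
  ext i j
  rw [mul_apply, mul_apply]
  simp only [mul_diagonal, submatrix_apply, transpose_apply, id, Function.comp_apply]
  refine Fintype.sum_of_injective (Fin.castLE h) (Fin.castLE_injective h) _ _ (fun a ha => ?_)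
    fun k => by simp
  have : ¬ a.val < q' := fun ha' => ha ⟨⟨a, ha'⟩, rfl⟩
  simp [this]

lemma loadingLoss_eq_of_eq_submatrix {d q q' : ℕ} (hq'q : q' ≤ q) (hq'd : q' ≤ d)
    {U : Matrix (Fin d) (Fin d) ℝ} (hU : U * Uᵀ = 1) {lam : Fin d → ℝ}
    (hge : ∀ j : Fin d, j.val < q' → 1 ≤ lam j)
    (hle : ∀ j : Fin d, q' ≤ j.val → j.val < q → lam j ≤ 1)
    {V : Matrix (Fin q') (Fin q) ℝ} (hV : V * Vᵀ = 1) {A₀ : Matrix (Fin d) (Fin q) ℝ}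
    (hA₀ : A₀ = U.submatrix id (Fin.castLE hq'd) *
      diagonal (fun k => √(lam (Fin.castLE hq'd k) - 1)) * V) :
    loadingLoss (U * diagonal lam * Uᵀ) (A₀ * A₀ᵀ) =
      ∑ a, lam a - ∑ a : Fin d with a.val < q, truncLogGap (lam a) := by
  set γ : Fin d → ℝ := fun a => if a.val < q' then lam a - 1 else 0
  have hsq : diagonal (fun k => √(lam (Fin.castLE hq'd k) - 1)) *
      diagonal (fun k => √(lam (Fin.castLE hq'd k) - 1)) =
        diagonal ((fun a => lam a - 1) ∘ Fin.castLE hq'd) := by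
    rw [diagonal_mul_diagonal]
    congr 1
    funext k
    exact Real.mul_self_sqrt (sub_nonneg.mpr (hge _ k.isLt))
  have hAA : A₀ * A₀ᵀ = U * diagonal γ * Uᵀ := by
    calc A₀ * A₀ᵀ = U.submatrix id (Fin.castLE hq'd) *
          diagonal (fun k => √(lam (Fin.castLE hq'd k) - 1)) * (V * Vᵀ) *
          diagonal (fun k => √(lam (Fin.castLE hq'd k) - 1)) *
          (U.submatrix id (Fin.castLE hq'd))ᵀ := by
          simp only [hA₀, transpose_mul, diagonal_transpose, Matrix.mul_assoc]
      _ = U * diagonal γ * Uᵀ := by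
          rw [hV, Matrix.mul_one, Matrix.mul_assoc (U.submatrix _ _), hsq,
            submatrix_castLE_mul_diagonal_mul_transpose]
  have hUtU : Uᵀ * (U * diagonal lam * Uᵀ) * U = diagonal lam := by
    simp only [← Matrix.mul_assoc, mul_eq_one_comm.mp hU, Matrix.one_mul]
    rw [Matrix.mul_assoc, mul_eq_one_comm.mp hU, Matrix.mul_one]
  have hγ : ∀ a, γ a + 1 ≠ 0 := by
    intro a
    by_cases ha : a.val < q'
    · simp only [γ, if_pos ha]
      linarith [hge a ha]
    · simp [γ, ha]
  rw [hAA, loadingLoss_conj_diagonal _ hU hγ, hUtU, sum_filter, ← sum_sub_distrib]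
  simp only [diagonal_apply_eq]
  refine sum_congr rfl fun a _ => ?_
  by_cases ha : a.val < q'
  · simp [γ, ha, ha.trans_le hq'q, log_add_self_div_self_eq (hge a ha)]
  · by_cases haq : a.val < q
    · simp [γ, ha, haq, truncLogGap_eq_zero_of_le_one (hle a (not_lt.mp ha) haq)]
    · simp [γ, ha, haq]

lemma loadingLoss_le_of_eq_submatrix {d q q' : ℕ} (hq'q : q' ≤ q) (hq'd : q' ≤ d)
    {U : Matrix (Fin d) (Fin d) ℝ} (hU : U * Uᵀ = 1) {lam : Fin d → ℝ} (hlam : Antitone lam)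
    (hge : ∀ j : Fin d, j.val < q' → 1 ≤ lam j)
    (hle : ∀ j : Fin d, q' ≤ j.val → j.val < q → lam j ≤ 1)
    {V : Matrix (Fin q') (Fin q) ℝ} (hV : V * Vᵀ = 1) {A₀ : Matrix (Fin d) (Fin q) ℝ}
    (hA₀ : A₀ = U.submatrix id (Fin.castLE hq'd) *
      diagonal (fun k => √(lam (Fin.castLE hq'd k) - 1)) * V)
    (A : Matrix (Fin d) (Fin q) ℝ) :
    loadingLoss (U * diagonal lam * Uᵀ) (A₀ * A₀ᵀ) ≤
      loadingLoss (U * diagonal lam * Uᵀ) (A * Aᵀ) := by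
  rw [loadingLoss_eq_of_eq_submatrix hq'q hq'd hU hge hle hV hA₀]
  refine le_loadingLoss hU hlam (by simpa using posSemidef_self_mul_conjTranspose A) ?_
  exact (rank_self_mul_transpose A).le.trans (rank_le_width A)

end TBFA

theorem loading_cm_step_maximizer_general {d q q' : ℕ}
    (S U : Matrix (Fin d) (Fin d) ℝ) (lam : Fin d → ℝ)
    (hU : U * Uᵀ = 1)
    (hdecomp : S = U * Matrix.diagonal lam * Uᵀ)
    (hmono : ∀ i j : Fin d, i ≤ j → lam j ≤ lam i)
    (hq'q : q' ≤ q) (hq'd : q' ≤ d)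
    (hge : ∀ j : Fin d, (j : ℕ) < q' → 1 ≤ lam j)
    (hle : ∀ j : Fin d, q' ≤ (j : ℕ) → (j : ℕ) < q → lam j ≤ 1)
    (V : Matrix (Fin q') (Fin q) ℝ) (hV : V * Vᵀ = 1)
    (A₀ : Matrix (Fin d) (Fin q) ℝ)
    (hA₀ : A₀ = Matrix.of fun i j =>
      ∑ k : Fin q', U i (Fin.castLE hq'd k) * Real.sqrt (lam (Fin.castLE hq'd k) - 1) * V k j) :
    (∀ A : Matrix (Fin d) (Fin q) ℝ,
        -(Real.log (A * Aᵀ + 1).det + ((A * Aᵀ + 1)⁻¹ * S).trace) ≤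
        -(Real.log (A₀ * A₀ᵀ + 1).det + ((A₀ * A₀ᵀ + 1)⁻¹ * S).trace)) ∧
    (∀ (hqd : q ≤ d), (∀ j : Fin d, (j : ℕ) < q → 1 ≤ lam j) →
      ∀ A₁ : Matrix (Fin d) (Fin q) ℝ,
        A₁ = (Matrix.of fun i j =>
          U i (Fin.castLE hqd j) * Real.sqrt (lam (Fin.castLE hqd j) - 1)) →
        ∀ A : Matrix (Fin d) (Fin q) ℝ,
          -(Real.log (A * Aᵀ + 1).det + ((A * Aᵀ + 1)⁻¹ * S).trace) ≤
          -(Real.log (A₁ * A₁ᵀ + 1).det + ((A₁ * A₁ᵀ + 1)⁻¹ * S).trace)) := by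
  subst hdecomp
  refine ⟨fun A => neg_le_neg ?_, fun hqd hge₁ A₁ hA₁ A => neg_le_neg ?_⟩
  · refine TBFA.loadingLoss_le_of_eq_submatrix hq'q hq'd hU hmono hge hle hV ?_ A
    rw [hA₀]
    ext i j
    rw [mul_apply]
    simp [mul_diagonal]
  · refine TBFA.loadingLoss_le_of_eq_submatrix le_rfl hqd hU hmono hge₁
      (fun j hqj hjq => absurd hjq (not_lt.mpr hqj)) (V := 1) (by simp) ?_ A
    rw [hA₁, Matrix.mul_one]
    ext i j
    simp [mul_diagonal]

/-- closed-form maximizer of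
`f(A) = −(ln|AA'+I| + tr((AA'+I)⁻¹ S))` over `A ∈ ℝ^{d×q}`: with
`S = U diag(λ) Uᵀ`, `λ` decreasing, the maximum is attained at
`A₀ = U_{q'} (Λ_{q'} − I)^{1/2} V` where `q'` is the largest index with `λ_{q'} ≥ 1`
(capped at `q`) and `V V' = I`; in particular if `λ_q ≥ 1` then
`A₁ = U_q (Λ_q − I)^{1/2}` is a maximizer. -/
theorem loading_cm_step_maximizer {d q q' : ℕ}
    (S U : Matrix (Fin d) (Fin d) ℝ) (lam : Fin d → ℝ)
    (hS : S.PosSemidef) (hU : U * Uᵀ = 1)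
    (hdecomp : S = U * Matrix.diagonal lam * Uᵀ)
    (hmono : ∀ i j : Fin d, i ≤ j → lam j ≤ lam i)
    (hq'q : q' ≤ q) (hq'd : q' ≤ d)
    (hge : ∀ j : Fin d, (j : ℕ) < q' → 1 ≤ lam j)
    (hle : ∀ j : Fin d, q' ≤ (j : ℕ) → (j : ℕ) < q → lam j ≤ 1)
    (V : Matrix (Fin q') (Fin q) ℝ) (hV : V * Vᵀ = 1)
    (A₀ : Matrix (Fin d) (Fin q) ℝ)
    (hA₀ : A₀ = Matrix.of fun i j =>
      ∑ k : Fin q', U i (Fin.castLE hq'd k) * Real.sqrt (lam (Fin.castLE hq'd k) - 1) * V k j) :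
    (∀ A : Matrix (Fin d) (Fin q) ℝ,
        -(Real.log (A * Aᵀ + 1).det + ((A * Aᵀ + 1)⁻¹ * S).trace) ≤
        -(Real.log (A₀ * A₀ᵀ + 1).det + ((A₀ * A₀ᵀ + 1)⁻¹ * S).trace)) ∧
    (∀ (hqd : q ≤ d), (∀ j : Fin d, (j : ℕ) < q → 1 ≤ lam j) →
      ∀ A₁ : Matrix (Fin d) (Fin q) ℝ,
        A₁ = (Matrix.of fun i j =>
          U i (Fin.castLE hqd j) * Real.sqrt (lam (Fin.castLE hqd j) - 1)) →
        ∀ A : Matrix (Fin d) (Fin q) ℝ,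
          -(Real.log (A * Aᵀ + 1).det + ((A * Aᵀ + 1)⁻¹ * S).trace) ≤
          -(Real.log (A₁ * A₁ᵀ + 1).det + ((A₁ * A₁ᵀ + 1)⁻¹ * S).trace)) :=
  loading_cm_step_maximizer_general S U lam hU hdecomp hmono hq'q hq'd hge hle V hV A₀ hA₀

end
end
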